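/- Let G be a graph on n vertices, let N ≥ n, and let G' be the graph with V(G') = V(G) ∪ Y ∪ Z, where Y and Z are disjoint sets of new vertices with |Y| = |Z| = N, and E(G') = E(G) ∪ {yv : y ∈ Y, v ∈ V(G)}. Then for every A ⊆ V(G'), setting A' = A ∩ V(G), the switch S(G',A') has at most as many edges as S(G',A). -/

import Mathlib

open SimpleGraph Finset

variable {V : Type*}

/-- The Seidel switch of a graph `G` on the vertex set `A`: pairs with exactly one
endpoint in `A` have their adjacency complemented. -/
def Seidel (G : SimpleGraph V) (A : Finset V) : SimpleGraph V where
  Adj x y := x ≠ y ∧ (G.Adj x y ↔ (x ∈ A ↔ y ∈ A))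
  symm := by
    refine ⟨?_⟩
    rintro x y ⟨hne, h⟩
    exact ⟨hne.symm, (G.adj_comm y x).trans (h.trans Iff.comm)⟩
  loopless := by
    refine ⟨?_⟩
    rintro x ⟨hne, _⟩
    exact hne rfl

instance Seidel.decidableAdj [DecidableEq V] (G : SimpleGraph V) [DecidableRel G.Adj]
    (A : Finset V) : DecidableRel (Seidel G A).Adj := fun x y => by
  unfold Seidel
  infer_instance

/-- `eCross G A` is the number of edges of `G` with exactly one endpoint in `A`. -/
def eCross [Fintype V] [DecidableEq V] (G : SimpleGraph V) [DecidableRel G.Adj]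
    (A : Finset V) : ℕ :=
  (G.edgeFinset.filter (fun e => ∃ x ∈ A, ∃ y, y ∉ A ∧ e = s(x, y))).card

/-- The graph `G'` obtained from `G` by adding a set `Y` of `N` vertices adjacent to all
vertices of `G`, and a set `Z` of `N` isolated vertices. -/
def extGraph (G : SimpleGraph V) (N : ℕ) : SimpleGraph (V ⊕ (Fin N ⊕ Fin N)) where
  Adj x y :=
    match x, y with
    | .inl a, .inl b => G.Adj a b
    | .inl _, .inr (.inl _) => True
    | .inr (.inl _), .inl _ => True
    | _, _ => False
  symm := by
    refine ⟨?_⟩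
    rintro (a | i | i) (b | j | j) h <;> simp_all <;> exact h.symm
  loopless := by
    refine ⟨?_⟩
    rintro (a | i | i) h <;> simp_all

instance extGraph.decidableAdj (G : SimpleGraph V) [DecidableRel G.Adj] (N : ℕ) :
    DecidableRel (extGraph G N).Adj := fun x y =>
  match x, y with
  | .inl a, .inl b => inferInstanceAs (Decidable (G.Adj a b))
  | .inl _, .inr (.inl _) => inferInstanceAs (Decidable True)
  | .inl _, .inr (.inr _) => inferInstanceAs (Decidable False)
  | .inr (.inl _), .inl _ => inferInstanceAs (Decidable True)
  | .inr (.inl _), .inr (.inl _) => inferInstanceAs (Decidable False)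
  | .inr (.inl _), .inr (.inr _) => inferInstanceAs (Decidable False)
  | .inr (.inr _), .inl _ => inferInstanceAs (Decidable False)
  | .inr (.inr _), .inr (.inl _) => inferInstanceAs (Decidable False)
  | .inr (.inr _), .inr (.inr _) => inferInstanceAs (Decidable False)


lemma card_filter_sumType {α β : Type*} [Fintype α] [Fintype β] (P : α ⊕ β → Prop)
    [DecidablePred P] :
    ((univ : Finset (α ⊕ β)).filter P).card
      = (univ.filter fun a => P (.inl a)).card + (univ.filter fun b => P (.inr b)).card := by
  rw [← Finset.univ_disjSum_univ]
  have h : (univ.disjSum univ).filter P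
      = (univ.filter fun a => P (.inl a)).disjSum (univ.filter fun b => P (.inr b)) := by
    ext x; cases x <;> simp
  rw [h, Finset.card_disjSum]
section Deg
variable {V : Type*} [Fintype V] [DecidableEq V] (G : SimpleGraph V) [DecidableRel G.Adj]
  (N : ℕ) (B : Finset (V ⊕ (Fin N ⊕ Fin N)))

lemma adj_vv (v w : V) : (Seidel (extGraph G N) B).Adj (.inl v) (.inl w)
    ↔ (Seidel G (univ.filter fun u => Sum.inl u ∈ B)).Adj v w := by
  simp [Seidel, extGraph]
lemma adj_vy (v : V) (i : Fin N) : (Seidel (extGraph G N) B).Adj (.inl v) (.inr (.inl i))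
    ↔ ((Sum.inl v : V ⊕ (Fin N ⊕ Fin N)) ∈ B ↔ .inr (.inl i) ∈ B) := by
  simp [Seidel, extGraph]
lemma adj_vz (v : V) (j : Fin N) : (Seidel (extGraph G N) B).Adj (.inl v) (.inr (.inr j))
    ↔ ¬((Sum.inl v : V ⊕ (Fin N ⊕ Fin N)) ∈ B ↔ .inr (.inr j) ∈ B) := by
  simp [Seidel, extGraph]
lemma adj_yv (v : V) (i : Fin N) : (Seidel (extGraph G N) B).Adj (.inr (.inl i)) (.inl v)
    ↔ ((Sum.inr (Sum.inl i) : V ⊕ (Fin N ⊕ Fin N)) ∈ B ↔ .inl v ∈ B) := by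
  simp [Seidel, extGraph]
lemma adj_yy (i i' : Fin N) : (Seidel (extGraph G N) B).Adj (.inr (.inl i)) (.inr (.inl i'))
    ↔ i ≠ i' ∧ ¬((Sum.inr (Sum.inl i) : V ⊕ (Fin N ⊕ Fin N)) ∈ B ↔ .inr (.inl i') ∈ B) := by
  simp [Seidel, extGraph]
lemma adj_yz (i j : Fin N) : (Seidel (extGraph G N) B).Adj (.inr (.inl i)) (.inr (.inr j))
    ↔ ¬((Sum.inr (Sum.inl i) : V ⊕ (Fin N ⊕ Fin N)) ∈ B ↔ .inr (.inr j) ∈ B) := by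
  simp [Seidel, extGraph]
lemma adj_zv (v : V) (j : Fin N) : (Seidel (extGraph G N) B).Adj (.inr (.inr j)) (.inl v)
    ↔ ¬((Sum.inr (Sum.inr j) : V ⊕ (Fin N ⊕ Fin N)) ∈ B ↔ .inl v ∈ B) := by
  simp [Seidel, extGraph]
lemma adj_zy (i j : Fin N) : (Seidel (extGraph G N) B).Adj (.inr (.inr j)) (.inr (.inl i))
    ↔ ¬((Sum.inr (Sum.inr j) : V ⊕ (Fin N ⊕ Fin N)) ∈ B ↔ .inr (.inl i) ∈ B) := by
  simp [Seidel, extGraph]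
lemma adj_zz (j j' : Fin N) : (Seidel (extGraph G N) B).Adj (.inr (.inr j)) (.inr (.inr j'))
    ↔ j ≠ j' ∧ ¬((Sum.inr (Sum.inr j) : V ⊕ (Fin N ⊕ Fin N)) ∈ B ↔ .inr (.inr j') ∈ B) := by
  simp [Seidel, extGraph]
end Deg

section Deg2
variable {V : Type*} [Fintype V] [DecidableEq V] (G : SimpleGraph V) [DecidableRel G.Adj]
  (N : ℕ) (B : Finset (V ⊕ (Fin N ⊕ Fin N)))

lemma deg_inl (v : V) : (Seidel (extGraph G N) B).degree (.inl v)
    = (Seidel G (univ.filter fun u => Sum.inl u ∈ B)).degree v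
      + (if (Sum.inl v : V ⊕ (Fin N ⊕ Fin N)) ∈ B
         then (univ.filter fun i : Fin N => Sum.inr (Sum.inl i) ∈ B).card
              + (univ.filter fun j : Fin N => Sum.inr (Sum.inr j) ∉ B).card
         else (univ.filter fun i : Fin N => Sum.inr (Sum.inl i) ∉ B).card
              + (univ.filter fun j : Fin N => Sum.inr (Sum.inr j) ∈ B).card) := by
  classical
  rw [degree, neighborFinset_eq_filter, card_filter_sumType, card_filter_sumType]
  have h1 : ((univ : Finset V).filter
      fun w => (Seidel (extGraph G N) B).Adj (.inl v) (.inl w)).card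
      = (Seidel G (univ.filter fun u => Sum.inl u ∈ B)).degree v := by
    rw [degree, neighborFinset_eq_filter]
    congr 1; ext w; simp [adj_vv]
  rw [h1]
  by_cases h : (Sum.inl v : V ⊕ (Fin N ⊕ Fin N)) ∈ B
  · have h2 : ((univ : Finset (Fin N)).filter
        fun i => (Seidel (extGraph G N) B).Adj (.inl v) (.inr (.inl i)))
        = (univ.filter fun i : Fin N => Sum.inr (Sum.inl i) ∈ B) := by
      ext i; simp [adj_vy, h]
    have h3 : ((univ : Finset (Fin N)).filter
        fun j => (Seidel (extGraph G N) B).Adj (.inl v) (.inr (.inr j)))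
        = (univ.filter fun j : Fin N => Sum.inr (Sum.inr j) ∉ B) := by
      ext j; simp [adj_vz, h]
    rw [h2, h3, if_pos h]
  · have h2 : ((univ : Finset (Fin N)).filter
        fun i => (Seidel (extGraph G N) B).Adj (.inl v) (.inr (.inl i)))
        = (univ.filter fun i : Fin N => Sum.inr (Sum.inl i) ∉ B) := by
      ext i; simp [adj_vy, h]
    have h3 : ((univ : Finset (Fin N)).filter
        fun j => (Seidel (extGraph G N) B).Adj (.inl v) (.inr (.inr j)))
        = (univ.filter fun j : Fin N => Sum.inr (Sum.inr j) ∈ B) := by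
      ext j; simp [adj_vz, h]
    rw [h2, h3, if_neg h]
end Deg2

section Deg3
variable {V : Type*} [Fintype V] [DecidableEq V] (G : SimpleGraph V) [DecidableRel G.Adj]
  (N : ℕ) (B : Finset (V ⊕ (Fin N ⊕ Fin N)))

lemma deg_y (i : Fin N) : (Seidel (extGraph G N) B).degree (.inr (.inl i))
    = (if (Sum.inr (Sum.inl i) : V ⊕ (Fin N ⊕ Fin N)) ∈ B
       then (univ.filter fun v : V => Sum.inl v ∈ B).card
            + (univ.filter fun i' : Fin N => Sum.inr (Sum.inl i') ∉ B).card
            + (univ.filter fun j : Fin N => Sum.inr (Sum.inr j) ∉ B).card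
       else (univ.filter fun v : V => Sum.inl v ∉ B).card
            + (univ.filter fun i' : Fin N => Sum.inr (Sum.inl i') ∈ B).card
            + (univ.filter fun j : Fin N => Sum.inr (Sum.inr j) ∈ B).card) := by
  classical
  rw [degree, neighborFinset_eq_filter, card_filter_sumType, card_filter_sumType]
  by_cases h : (Sum.inr (Sum.inl i) : V ⊕ (Fin N ⊕ Fin N)) ∈ B
  · have h1 : ((univ : Finset V).filter
        fun v => (Seidel (extGraph G N) B).Adj (.inr (.inl i)) (.inl v))
        = (univ.filter fun v : V => Sum.inl v ∈ B) := by
      ext v; simp [adj_yv, h]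
    have h2 : ((univ : Finset (Fin N)).filter
        fun i' => (Seidel (extGraph G N) B).Adj (.inr (.inl i)) (.inr (.inl i')))
        = (univ.filter fun i' : Fin N => Sum.inr (Sum.inl i') ∉ B) := by
      ext i'; simp [adj_yy, h]; all_goals aesop
    have h3 : ((univ : Finset (Fin N)).filter
        fun j => (Seidel (extGraph G N) B).Adj (.inr (.inl i)) (.inr (.inr j)))
        = (univ.filter fun j : Fin N => Sum.inr (Sum.inr j) ∉ B) := by
      ext j; simp [adj_yz, h]
    rw [h1, h2, h3, if_pos h]; omega
  · have h1 : ((univ : Finset V).filter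
        fun v => (Seidel (extGraph G N) B).Adj (.inr (.inl i)) (.inl v))
        = (univ.filter fun v : V => Sum.inl v ∉ B) := by
      ext v; simp [adj_yv, h]
    have h2 : ((univ : Finset (Fin N)).filter
        fun i' => (Seidel (extGraph G N) B).Adj (.inr (.inl i)) (.inr (.inl i')))
        = (univ.filter fun i' : Fin N => Sum.inr (Sum.inl i') ∈ B) := by
      ext i'; simp [adj_yy, h]; all_goals aesop
    have h3 : ((univ : Finset (Fin N)).filter
        fun j => (Seidel (extGraph G N) B).Adj (.inr (.inl i)) (.inr (.inr j)))
        = (univ.filter fun j : Fin N => Sum.inr (Sum.inr j) ∈ B) := by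
      ext j; simp [adj_yz, h]
    rw [h1, h2, h3, if_neg h]; omega

lemma deg_z (j : Fin N) : (Seidel (extGraph G N) B).degree (.inr (.inr j))
    = (if (Sum.inr (Sum.inr j) : V ⊕ (Fin N ⊕ Fin N)) ∈ B
       then (univ.filter fun v : V => Sum.inl v ∉ B).card
            + (univ.filter fun i : Fin N => Sum.inr (Sum.inl i) ∉ B).card
            + (univ.filter fun j' : Fin N => Sum.inr (Sum.inr j') ∉ B).card
       else (univ.filter fun v : V => Sum.inl v ∈ B).card
            + (univ.filter fun i : Fin N => Sum.inr (Sum.inl i) ∈ B).card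
            + (univ.filter fun j' : Fin N => Sum.inr (Sum.inr j') ∈ B).card) := by
  classical
  rw [degree, neighborFinset_eq_filter, card_filter_sumType, card_filter_sumType]
  by_cases h : (Sum.inr (Sum.inr j) : V ⊕ (Fin N ⊕ Fin N)) ∈ B
  · have h1 : ((univ : Finset V).filter
        fun v => (Seidel (extGraph G N) B).Adj (.inr (.inr j)) (.inl v))
        = (univ.filter fun v : V => Sum.inl v ∉ B) := by
      ext v; simp [adj_zv, h]
    have h2 : ((univ : Finset (Fin N)).filter
        fun i => (Seidel (extGraph G N) B).Adj (.inr (.inr j)) (.inr (.inl i)))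
        = (univ.filter fun i : Fin N => Sum.inr (Sum.inl i) ∉ B) := by
      ext i; simp [adj_zy, h]
    have h3 : ((univ : Finset (Fin N)).filter
        fun j' => (Seidel (extGraph G N) B).Adj (.inr (.inr j)) (.inr (.inr j')))
        = (univ.filter fun j' : Fin N => Sum.inr (Sum.inr j') ∉ B) := by
      ext j'; simp [adj_zz, h]; all_goals aesop
    rw [h1, h2, h3, if_pos h]; omega
  · have h1 : ((univ : Finset V).filter
        fun v => (Seidel (extGraph G N) B).Adj (.inr (.inr j)) (.inl v))
        = (univ.filter fun v : V => Sum.inl v ∈ B) := by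
      ext v; simp [adj_zv, h]
    have h2 : ((univ : Finset (Fin N)).filter
        fun i => (Seidel (extGraph G N) B).Adj (.inr (.inr j)) (.inr (.inl i)))
        = (univ.filter fun i : Fin N => Sum.inr (Sum.inl i) ∈ B) := by
      ext i; simp [adj_zy, h]
    have h3 : ((univ : Finset (Fin N)).filter
        fun j' => (Seidel (extGraph G N) B).Adj (.inr (.inr j)) (.inr (.inr j')))
        = (univ.filter fun j' : Fin N => Sum.inr (Sum.inr j') ∈ B) := by
      ext j'; simp [adj_zz, h]; all_goals aesop
    rw [h1, h2, h3, if_neg h]; omega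
end Deg3

section Master
variable {V : Type*} [Fintype V] [DecidableEq V]

lemma master (G : SimpleGraph V) [DecidableRel G.Adj] (N : ℕ)
    (B : Finset (V ⊕ (Fin N ⊕ Fin N)))
    (a b p p' q q' : ℕ)
    (ha : a = (univ.filter fun v : V => Sum.inl v ∈ B).card)
    (hb : b = (univ.filter fun v : V => Sum.inl v ∉ B).card)
    (hp : p = (univ.filter fun i : Fin N => Sum.inr (Sum.inl i) ∈ B).card)
    (hp' : p' = (univ.filter fun i : Fin N => Sum.inr (Sum.inl i) ∉ B).card)
    (hq : q = (univ.filter fun j : Fin N => Sum.inr (Sum.inr j) ∈ B).card)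
    (hq' : q' = (univ.filter fun j : Fin N => Sum.inr (Sum.inr j) ∉ B).card) :
    2 * (Seidel (extGraph G N) B).edgeFinset.card =
      2 * (Seidel G (univ.filter fun v => Sum.inl v ∈ B)).edgeFinset.card
      + (a*(p+q') + b*(p'+q) + p*(a+p'+q') + p'*(b+p+q) + q*(b+p'+q') + q'*(a+p+q)) := by
  classical
  rw [← sum_degrees_eq_twice_card_edges, Fintype.sum_sum_type, Fintype.sum_sum_type]
  simp only [deg_inl, deg_y, deg_z]
  rw [Finset.sum_add_distrib, sum_degrees_eq_twice_card_edges]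
  simp only [Finset.sum_ite, Finset.sum_const, smul_eq_mul, Finset.sum_const_nat]
  rw [← ha, ← hb, ← hp, ← hp', ← hq, ← hq']
  ring
end Master

lemma arith_core (a b p p' q q' N : ℕ) (h1 : a + b ≤ N) (h2 : p + p' = N) (h3 : q + q' = N) :
    a*(0+N) + b*(N+0) + 0*(a+N+N) + N*(b+0+0) + 0*(b+N+N) + N*(a+0+0)
      ≤ a*(p+q') + b*(p'+q) + p*(a+p'+q') + p'*(b+p+q) + q*(b+p'+q') + q'*(a+p+q) := by
  zify
  have ha : (0:ℤ) ≤ a := by positivity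
  have hb : (0:ℤ) ≤ b := by positivity
  have hp : (0:ℤ) ≤ p := by positivity
  have hp' : (0:ℤ) ≤ p' := by positivity
  have hq : (0:ℤ) ≤ q := by positivity
  have hq' : (0:ℤ) ≤ q' := by positivity
  have h1' : (a:ℤ) + b ≤ N := by exact_mod_cast h1
  have h2' : (p:ℤ) + p' = N := by exact_mod_cast h2
  have h3' : (q:ℤ) + q' = N := by exact_mod_cast h3
  rcases le_total (q:ℤ) p with h | h
  · nlinarith [mul_nonneg ha (sub_nonneg.2 h),
      mul_nonneg (sub_nonneg.2 (le_trans (by linarith : (a:ℤ)+b ≤ N) (le_refl _))) (sub_nonneg.2 h),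
      mul_nonneg hp hp', mul_nonneg hq hq', mul_nonneg hq hp',
      mul_nonneg (by linarith : (0:ℤ) ≤ (N:ℤ) - (a+b)) (sub_nonneg.2 h)]
  · nlinarith [mul_nonneg hb (sub_nonneg.2 h),
      mul_nonneg hp hp', mul_nonneg hq hq', mul_nonneg hp hq',
      mul_nonneg (by linarith : (0:ℤ) ≤ (N:ℤ) - (a+b)) (sub_nonneg.2 h)]

theorem extGraph_seidel_inter_le [Fintype V] [DecidableEq V]
    (G : SimpleGraph V) [DecidableRel G.Adj] (N : ℕ) (hN : Fintype.card V ≤ N)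
    (A : Finset (V ⊕ (Fin N ⊕ Fin N))) :
    (Seidel (extGraph G N) (A.filter (fun x => x.isLeft))).edgeFinset.card
      ≤ (Seidel (extGraph G N) A).edgeFinset.card := by
  classical
  set a := (univ.filter fun v : V => Sum.inl v ∈ A).card with ha
  set b := (univ.filter fun v : V => Sum.inl v ∉ A).card with hb
  set p := (univ.filter fun i : Fin N => Sum.inr (Sum.inl i) ∈ A).card with hp
  set p' := (univ.filter fun i : Fin N => Sum.inr (Sum.inl i) ∉ A).card with hp'
  set q := (univ.filter fun j : Fin N => Sum.inr (Sum.inr j) ∈ A).card with hq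
  set q' := (univ.filter fun j : Fin N => Sum.inr (Sum.inr j) ∉ A).card with hq'
  have h2 := master G N A a b p p' q q' ha hb hp hp' hq hq'
  have h1 := master G N (A.filter fun x => x.isLeft) a b 0 N 0 N
    (by rw [ha]; congr 1; ext v; simp)
    (by rw [hb]; congr 1; ext v; simp)
    (by symm; rw [Finset.card_eq_zero]; ext i; simp)
    (by rw [show (univ.filter fun i : Fin N => Sum.inr (Sum.inl i) ∉ A.filter (fun x => x.isLeft)) = (univ : Finset (Fin N)) from by ext i; simp, Finset.card_univ, Fintype.card_fin])
    (by symm; rw [Finset.card_eq_zero]; ext j; simp)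
    (by rw [show (univ.filter fun j : Fin N => Sum.inr (Sum.inr j) ∉ A.filter (fun x => x.isLeft)) = (univ : Finset (Fin N)) from by ext j; simp, Finset.card_univ, Fintype.card_fin])
  have hBV : (univ.filter fun v : V => Sum.inl v ∈ A.filter (fun x => x.isLeft))
      = (univ.filter fun v : V => Sum.inl v ∈ A) := by ext v; simp
  rw [hBV] at h1
  have hab : a + b ≤ N := by
    rw [ha, hb]
    calc (univ.filter fun v : V => Sum.inl v ∈ A).card
        + (univ.filter fun v : V => Sum.inl v ∉ A).card
        = (univ : Finset V).card := Finset.card_filter_add_card_filter_not _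
      _ = Fintype.card V := Finset.card_univ
      _ ≤ N := hN
  have hpp : p + p' = N := by
    rw [hp, hp']
    calc (univ.filter fun i : Fin N => Sum.inr (Sum.inl i) ∈ A).card
        + (univ.filter fun i : Fin N => Sum.inr (Sum.inl i) ∉ A).card
        = (univ : Finset (Fin N)).card := Finset.card_filter_add_card_filter_not _
      _ = N := by simp
  have hqq : q + q' = N := by
    rw [hq, hq']
    calc (univ.filter fun j : Fin N => Sum.inr (Sum.inr j) ∈ A).card
        + (univ.filter fun j : Fin N => Sum.inr (Sum.inr j) ∉ A).card
        = (univ : Finset (Fin N)).card := Finset.card_filter_add_card_filter_not _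
      _ = N := by simp
  have key := arith_core a b p p' q q' N hab hpp hqq
  omega
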